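/- (Theorem 1(ii)) If q > b/(a+b), then H_q minimizes the expected misclassification cost L_{a,b} among all RDCs with predicted positive rate at most α: for every RDC H with E[H] ≤ α, L_{a,b}(H_q) ≤ L_{a,b}(H). -/

import Mathlib

open MeasureTheory Set

/-- A randomized decision classifier (RDC): an `ℋ`-measurable random variable
with values in the unit interval. -/
def IsRDC {Ω : Type*} (ℋ : MeasurableSpace Ω) (H : Ω → ℝ) : Prop :=
  Measurable[ℋ] H ∧ ∀ ω, H ω ∈ Set.Icc (0 : ℝ) 1

/-- The optimal RDC `H_q` obtained by thresholding the posterior probability `η` at `q`,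
with randomization on the event `{η = q}` calibrated so that the predicted positive
rate equals `α`. -/
noncomputable def Hq {Ω : Type*} [MeasurableSpace Ω] (P : Measure Ω) (η : Ω → ℝ)
    (α q : ℝ) : Ω → ℝ := fun ω =>
  if P {ω' | η ω' = q} = 0 then {ω' | η ω' > q}.indicator (fun _ => (1 : ℝ)) ω
  else {ω' | η ω' > q}.indicator (fun _ => (1 : ℝ)) ω +
    ((α - (P {ω' | η ω' > q}).toReal) / (P {ω' | η ω' = q}).toReal) *
      {ω' | η ω' = q}.indicator (fun _ => (1 : ℝ)) ω

/-- Expected misclassification cost `L_{a,b}(H) = a·E[(1−H)·1_A] + b·E[H·1_{Aᶜ}]`. -/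
noncomputable def cost {Ω : Type*} [MeasurableSpace Ω] (P : Measure Ω) (A : Set Ω)
    (a b : ℝ) (H : Ω → ℝ) : ℝ :=
  a * ∫ ω, (1 - H ω) * A.indicator (fun _ => (1 : ℝ)) ω ∂P +
    b * ∫ ω, H ω * Aᶜ.indicator (fun _ => (1 : ℝ)) ω ∂P

/-!
On `ℋ`-measurable RDCs the cost is affine in `E[H]` and `E[H η]`: replacing `1_A` by its
conditional probability `η` gives `L_{a,b}(H) = a P[A] + b E[H] - (a + b) E[H η]`.
Since `H_q` is `1` where `η > q` and `0` where `η < q`, we have `(H_q - H)(q - η) ≤ 0`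
pointwise, so `E[(H_q - H) η] ≥ q (E[H_q] - E[H])`, where `E[H_q] = α ≥ E[H]`. Hence
`L_{a,b}(H_q) - L_{a,b}(H) ≤ (b - (a + b) q) (α - E[H]) ≤ 0` as soon as `q > b / (a + b)`.
-/

section Cost

variable {Ω : Type*} {m : MeasurableSpace Ω} {P : Measure Ω} [IsFiniteMeasure P]

lemma integrable_of_mem_Icc {f : Ω → ℝ} (hf : Measurable f) (h01 : ∀ ω, f ω ∈ Icc (0 : ℝ) 1) :
    Integrable f P :=
  .of_bound hf.aestronglyMeasurable 1 <| .of_forall fun ω => by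
    rw [Real.norm_eq_abs, abs_le]
    exact ⟨by linarith [(h01 ω).1], (h01 ω).2⟩

lemma cost_eq {A : Set Ω} (hA : MeasurableSet A) (a b : ℝ) {K : Ω → ℝ} (hK : Integrable K P) :
    cost P A a b K = a * P.real A + b * ∫ ω, K ω ∂P
      - (a + b) * ∫ ω, K ω * A.indicator (fun _ => (1 : ℝ)) ω ∂P := by
  have hKA : Integrable (fun ω => K ω * A.indicator (fun _ => (1 : ℝ)) ω) P := by
    simpa [← indicator_mul_right] using hK.indicator hA
  have hpos : ∫ ω, (1 - K ω) * A.indicator (fun _ => (1 : ℝ)) ω ∂P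
      = P.real A - ∫ ω, K ω * A.indicator (fun _ => (1 : ℝ)) ω ∂P := by
    simp_rw [sub_mul, one_mul]
    rw [integral_sub ((integrable_const 1).indicator hA) hKA]
    exact congrArg (· - _) (integral_indicator_one hA)
  have hneg : ∫ ω, K ω * Aᶜ.indicator (fun _ => (1 : ℝ)) ω ∂P
      = ∫ ω, K ω ∂P - ∫ ω, K ω * A.indicator (fun _ => (1 : ℝ)) ω ∂P := by
    rw [← integral_sub hK hKA]
    congr 1 with ω
    by_cases h : ω ∈ A <;> simp [h]
  rw [cost, hpos, hneg]
  ring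

lemma cost_le_cost_of_threshold {A : Set Ω} (hA : MeasurableSet A) {a b q : ℝ}
    (hab : 0 < a + b) (hq : b / (a + b) < q) {η G H : Ω → ℝ}
    (hη : Measurable η) (hη01 : ∀ ω, η ω ∈ Icc (0 : ℝ) 1)
    (hG : Measurable G) (hG01 : ∀ ω, G ω ∈ Icc (0 : ℝ) 1)
    (hH : Measurable H) (hH01 : ∀ ω, H ω ∈ Icc (0 : ℝ) 1)
    (hGA : ∫ ω, G ω * A.indicator (fun _ => (1 : ℝ)) ω ∂P = ∫ ω, G ω * η ω ∂P)
    (hHA : ∫ ω, H ω * A.indicator (fun _ => (1 : ℝ)) ω ∂P = ∫ ω, H ω * η ω ∂P)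
    (hG1 : ∀ ω, q < η ω → G ω = 1) (hG0 : ∀ ω, η ω < q → G ω = 0)
    (hrate : ∫ ω, H ω ∂P ≤ ∫ ω, G ω ∂P) :
    cost P A a b G ≤ cost P A a b H := by
  have iG : Integrable G P := integrable_of_mem_Icc hG hG01
  have iH : Integrable H P := integrable_of_mem_Icc hH hH01
  have iGη : Integrable (fun ω => G ω * η ω) P :=
    integrable_of_mem_Icc (hG.mul hη) fun ω => unitInterval.mul_mem (hG01 ω) (hη01 ω)
  have iHη : Integrable (fun ω => H ω * η ω) P :=
    integrable_of_mem_Icc (hH.mul hη) fun ω => unitInterval.mul_mem (hH01 ω) (hη01 ω)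
  have hpointwise : ∀ ω, (G ω - H ω) * (q - η ω) ≤ 0 := fun ω => by
    rcases lt_trichotomy (η ω) q with h | h | h
    · nlinarith [hG0 ω h, (hH01 ω).1]
    · simp [h]
    · nlinarith [hG1 ω h, (hH01 ω).2]
  have hNP : q * (∫ ω, G ω ∂P - ∫ ω, H ω ∂P) ≤ ∫ ω, G ω * η ω ∂P - ∫ ω, H ω * η ω ∂P := by
    have h := integral_nonpos (μ := P) hpointwise
    simp_rw [mul_sub, sub_mul] at h
    rw [integral_sub (by fun_prop) (by fun_prop), integral_sub (by fun_prop) (by fun_prop),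
      integral_sub iGη iHη, integral_mul_const, integral_mul_const] at h
    linarith
  have hbq : b < (a + b) * q := by rwa [div_lt_iff₀' hab] at hq
  rw [cost_eq hA a b iG, cost_eq hA a b iH, hGA, hHA]
  nlinarith [mul_nonneg (sub_nonneg.2 hbq.le) (sub_nonneg.2 hrate)]

end Cost

section Threshold

variable {Ω : Type*} {ℋ m : MeasurableSpace Ω} {P : Measure Ω} {η : Ω → ℝ} {α q : ℝ}

/-- The first branch of `Hq` is the second one read with `x / 0 = 0`. -/
lemma Hq_apply (ω : Ω) :
    Hq P η α q ω = {ω' | η ω' > q}.indicator (fun _ => (1 : ℝ)) ω +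
      (α - P.real {ω' | η ω' > q}) / P.real {ω' | η ω' = q} *
        {ω' | η ω' = q}.indicator (fun _ => (1 : ℝ)) ω := by
  unfold Hq
  split_ifs with h
  · simp [measureReal_def, h]
  · rfl

lemma Hq_of_gt {ω : Ω} (h : q < η ω) : Hq P η α q ω = 1 := by
  simp [Hq_apply, h, h.ne']

lemma Hq_of_lt {ω : Ω} (h : η ω < q) : Hq P η α q ω = 0 := by
  simp [Hq_apply, h.ne, h.le]

lemma Hq_of_eq {ω : Ω} (h : η ω = q) :
    Hq P η α q ω = (α - P.real {ω' | η ω' > q}) / P.real {ω' | η ω' = q} := by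
  simp [Hq_apply, h]

lemma Hq_mem_Icc (hgt : P.real {ω | η ω > q} ≤ α)
    (hge : α ≤ P.real {ω | η ω > q} + P.real {ω | η ω = q}) (ω : Ω) :
    Hq P η α q ω ∈ Icc (0 : ℝ) 1 := by
  rcases lt_trichotomy (η ω) q with h | h | h
  · simp [Hq_of_lt h]
  · rw [Hq_of_eq h]
    exact ⟨div_nonneg (by linarith) measureReal_nonneg,
      div_le_one_of_le₀ (by linarith) measureReal_nonneg⟩
  · simp [Hq_of_gt h]

lemma measurable_Hq (hη : Measurable[ℋ] η) :
    Measurable[ℋ] (Hq P η α q) := by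
  have hcomp : Hq P η α q = (fun x => (Ioi q).indicator (fun _ => (1 : ℝ)) x +
      (α - P.real {ω | η ω > q}) / P.real {ω | η ω = q} *
        ({q} : Set ℝ).indicator (fun _ => 1) x) ∘ η :=
    funext Hq_apply
  rw [hcomp]
  exact ((measurable_const.indicator measurableSet_Ioi).add
    ((measurable_const.indicator (measurableSet_singleton q)).const_mul _)).comp hη

lemma integral_Hq [IsFiniteMeasure P] (hη : Measurable η) (hgt : P.real {ω | η ω > q} ≤ α)
    (hge : α ≤ P.real {ω | η ω > q} + P.real {ω | η ω = q}) :
    ∫ ω, Hq P η α q ω ∂P = α := by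
  have hmgt : MeasurableSet {ω | η ω > q} := measurableSet_lt measurable_const hη
  have hmeq : MeasurableSet {ω | η ω = q} := hη (measurableSet_singleton q)
  simp_rw [Hq_apply]
  rw [integral_add ((integrable_const 1).indicator hmgt)
      (((integrable_const 1).indicator hmeq).const_mul _), integral_const_mul,
    integral_indicator_const _ hmgt, integral_indicator_const _ hmeq, smul_eq_mul, smul_eq_mul,
    mul_one, mul_one]
  rcases eq_or_ne (P.real {ω | η ω = q}) 0 with h0 | h0
  · rw [h0] at hge
    simp only [h0, div_zero, zero_mul]
    linarith
  · field_simp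
    ring

lemma measureReal_gt_le_of_quantile [IsProbabilityMeasure P] (hη : Measurable η)
    (hq₁ : P.real {ω | η ω < q} ≤ 1 - α) (hq₂ : 1 - α ≤ P.real {ω | η ω ≤ q}) :
    P.real {ω | η ω > q} ≤ α ∧ α ≤ P.real {ω | η ω > q} + P.real {ω | η ω = q} := by
  have hle : P.real {ω | η ω ≤ q} = P.real {ω | η ω < q} + P.real {ω | η ω = q} := by
    have hdisj : Disjoint {ω | η ω < q} {ω | η ω = q} :=
      disjoint_left.2 fun _ h₁ h₂ => (ne_of_lt h₁) h₂
    have hmeq : MeasurableSet {ω | η ω = q} := hη (measurableSet_singleton q)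
    rw [← measureReal_union hdisj hmeq]
    congr 1 with ω
    simp [le_iff_lt_or_eq]
  have hcompl : P.real {ω | η ω ≤ q} + P.real {ω | η ω > q} = 1 := by
    have hmle : MeasurableSet {ω | η ω ≤ q} := hη measurableSet_Iic
    simpa [compl_ofPred, not_le] using probReal_add_probReal_compl (μ := P) hmle
  constructor <;> linarith

end Threshold

theorem Hq_min_cost_of_rate_le_general
    {Ω : Type*} (ℋ : MeasurableSpace Ω) [𝒜 : MeasurableSpace Ω]
    (P : Measure Ω) [IsProbabilityMeasure P] (hℋ : ℋ ≤ 𝒜)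
    (A : Set Ω) (hA : MeasurableSet A)
    (η : Ω → ℝ) (hηm : Measurable[ℋ] η) (hη01 : ∀ ω, η ω ∈ Set.Icc (0 : ℝ) 1)
    (hηcond : ∀ Z : Ω → ℝ, Measurable[ℋ] Z → (∃ C, ∀ ω, |Z ω| ≤ C) →
      ∫ ω, η ω * Z ω ∂P = ∫ ω, A.indicator (fun _ => (1 : ℝ)) ω * Z ω ∂P)
    (α : ℝ)
    (q : ℝ) (hq₁ : (P {ω | η ω < q}).toReal ≤ 1 - α)
    (hq₂ : 1 - α ≤ (P {ω | η ω ≤ q}).toReal)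
    (a b : ℝ) (hab : 0 < a + b)
    (hqgt : b / (a + b) < q) :
    ∀ H : Ω → ℝ, IsRDC ℋ H → ∫ ω, H ω ∂P ≤ α →
      cost P A a b (Hq P η α q) ≤ cost P A a b H := by
  rintro H ⟨hHm, hH01⟩ hHα
  have hη : Measurable η := hηm.mono hℋ le_rfl
  have hcond : ∀ K : Ω → ℝ, Measurable[ℋ] K → (∀ ω, K ω ∈ Icc (0 : ℝ) 1) →
      ∫ ω, K ω * A.indicator (fun _ => (1 : ℝ)) ω ∂P = ∫ ω, K ω * η ω ∂P := fun K hK hK01 => by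
    simp_rw [mul_comm (K _)]
    refine (hηcond K hK ⟨1, fun ω => abs_le.2 ⟨?_, (hK01 ω).2⟩⟩).symm
    linarith [(hK01 ω).1]
  obtain ⟨hgt, hge⟩ := measureReal_gt_le_of_quantile hη hq₁ hq₂
  have hG01 := Hq_mem_Icc hgt hge
  refine cost_le_cost_of_threshold hA hab hqgt hη hη01 ((measurable_Hq hηm).mono hℋ le_rfl)
    hG01 (hHm.mono hℋ le_rfl) hH01 (hcond _ (measurable_Hq hηm) hG01) (hcond H hHm hH01)
    (fun _ => Hq_of_gt) (fun _ => Hq_of_lt) ?_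
  rwa [integral_Hq hη hgt hge]

/-- Theorem 1(ii). If `q > b/(a+b)` then `H_q` minimizes the
expected misclassification cost among all RDCs with predicted positive rate at most `α`. -/
theorem Hq_min_cost_of_rate_le
    {Ω : Type*} (ℋ : MeasurableSpace Ω) [𝒜 : MeasurableSpace Ω]
    (P : Measure Ω) [IsProbabilityMeasure P] (hℋ : ℋ ≤ 𝒜)
    (A : Set Ω) (hA : MeasurableSet A) (hA0 : 0 < P A) (hA1 : P A < 1)
    (hAH : ¬ MeasurableSet[ℋ] A)
    (η : Ω → ℝ) (hηm : Measurable[ℋ] η) (hη01 : ∀ ω, η ω ∈ Set.Icc (0 : ℝ) 1)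
    (hηcond : ∀ Z : Ω → ℝ, Measurable[ℋ] Z → (∃ C, ∀ ω, |Z ω| ≤ C) →
      ∫ ω, η ω * Z ω ∂P = ∫ ω, A.indicator (fun _ => (1 : ℝ)) ω * Z ω ∂P)
    (α : ℝ) (hα : α ∈ Set.Ioo (0 : ℝ) 1)
    (q : ℝ) (hq₁ : (P {ω | η ω < q}).toReal ≤ 1 - α)
    (hq₂ : 1 - α ≤ (P {ω | η ω ≤ q}).toReal)
    (a b : ℝ) (ha : 0 ≤ a) (hb : 0 ≤ b) (hab : 0 < a + b)
    (hqgt : b / (a + b) < q) :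
    ∀ H : Ω → ℝ, IsRDC ℋ H → ∫ ω, H ω ∂P ≤ α →
      cost P A a b (Hq P η α q) ≤ cost P A a b H :=
  Hq_min_cost_of_rate_le_general ℋ (𝒜 := 𝒜) P hℋ A hA η hηm hη01 hηcond α q hq₁ hq₂ a b hab hqgt
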